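/- (Kernel of a Weyl operator as a short-time Fourier transform of its symbol.) Let g ∈ 𝒮(ℝ^d) and let σ : ℝ^{2d} → ℂ be bounded and measurable. For w, z ∈ ℝ^{2d}, |∫_{ℝ^{2d}} σ(u) conj( W(π(w)g, π(z)g)(u) ) du| = |V_{W(g,g)} σ( (w+z)/2, j(w−z) )|, where the left-hand side is the Weyl pairing ⟨σ^w π(z)g, π(w)g⟩, W(f,h)(x,η) = ∫_{ℝ^d} f(x+t/2) conj(h(x−t/2)) e^{−2πi η·t} dt is the cross-Wigner distribution, j(z₁,z₂) = (z₂,−z₁) for z₁, z₂ ∈ ℝ^d, and V_Φσ(u,ζ) = ∫_{ℝ^{2d}} σ(y) conj(Φ(y−u)) e^{−2πi ζ·y} dy. -/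

import Mathlib

/-!
The cross-Wigner distribution is covariant under time-frequency shifts: the substitution
`t ↦ t + (x_w - x_z)` in its defining integral shows that `W(π(w)f, π(z)h)` is `W(f,h)` translated
by the midpoint `(w+z)/2` and modulated by `j(w-z)`, times the unimodular constant
`e^{πi (η_w + η_z)·(x_w - x_z)}`. Pairing with `σ` therefore produces that constant times
`V_{W(g,g)}σ((w+z)/2, j(w-z))`, and the constant disappears in absolute value.
-/

open MeasureTheory Complex SchwartzMap
open scoped Real ContDiff ENNReal

/-- Configuration space `ℝ^d`. -/
abbrev ConfSpace (d : ℕ) := EuclideanSpace ℝ (Fin d)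

/-- Phase space `ℝ^{2d}`, with coordinates split as `(x, η)`. -/
abbrev PhaseSpace (d : ℕ) := EuclideanSpace ℝ (Fin d ⊕ Fin d)

/-- First (position) component of a phase-space point. -/
noncomputable def posPart {d : ℕ} (z : PhaseSpace d) : ConfSpace d := WithLp.toLp 2 (fun i => z (Sum.inl i))

/-- Second (frequency) component of a phase-space point. -/
noncomputable def freqPart {d : ℕ} (z : PhaseSpace d) : ConfSpace d := WithLp.toLp 2 (fun i => z (Sum.inr i))

/-- Assemble a phase-space point from its components. -/
noncomputable def phasePt {d : ℕ} (x η : ConfSpace d) : PhaseSpace d := WithLp.toLp 2 (Sum.elim x η)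

/-- The polynomial weight `v_s(z) = (1 + |z|^2)^(s/2)`. -/
noncomputable def vWeight (s : ℝ) {V : Type*} [NormedAddCommGroup V] (z : V) : ℝ :=
  (1 + ‖z‖ ^ 2) ^ (s / 2)

/-- The action of a matrix on `ℝ^{2d}`. -/
noncomputable def matApply {ι : Type*} [Fintype ι] (M : Matrix ι ι ℝ)
    (z : EuclideanSpace ℝ ι) : EuclideanSpace ℝ ι := WithLp.toLp 2 (M.mulVec z)

/-- The standard symplectic matrix `J = [[0, -I],[I, 0]]`. -/
noncomputable def Jmat (d : ℕ) : Matrix (Fin d ⊕ Fin d) (Fin d ⊕ Fin d) ℝ :=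
  Matrix.fromBlocks 0 (-1) 1 0

/-- `𝒜 ∈ Sp(d,ℝ)` iff `𝒜ᵀ J 𝒜 = J`. -/
def IsSymplectic {d : ℕ} (A : Matrix (Fin d ⊕ Fin d) (Fin d ⊕ Fin d) ℝ) : Prop :=
  A.transpose * Jmat d * A = Jmat d

/-- The time-frequency shift `π(z)f(t) = e^{2πi η·t} f(t - x)` of a plain function,
where `z = (x, η)`. -/
noncomputable def tfShift {d : ℕ} (z : PhaseSpace d) (f : ConfSpace d → ℂ) :
    ConfSpace d → ℂ := fun t =>
  Complex.exp (2 * (π : ℂ) * Complex.I * ∑ i, (freqPart z i : ℂ) * (t i : ℂ)) *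
    f (t - posPart z)

/-- The cross-Wigner distribution
`W(f,h)(x,η) = ∫ f(x + t/2) conj(h(x - t/2)) e^{-2πi η·t} dt`. -/
noncomputable def wigner {d : ℕ} (f h : ConfSpace d → ℂ) (p : PhaseSpace d) : ℂ :=
  ∫ t : ConfSpace d, f (posPart p + (2⁻¹ : ℝ) • t) *
    (starRingEnd ℂ) (h (posPart p - (2⁻¹ : ℝ) • t)) *
    Complex.exp (-2 * (π : ℂ) * Complex.I * ∑ i, (freqPart p i : ℂ) * (t i : ℂ))

/-- The short-time Fourier transform on `ℝ^{2d}`: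
`V_Φσ(u,ζ) = ∫ σ(y) conj(Φ(y-u)) e^{-2πi ζ·y} dy`. -/
noncomputable def stftPhase {d : ℕ} (Φ : PhaseSpace d → ℂ) (σ : PhaseSpace d → ℂ)
    (u ζ : PhaseSpace d) : ℂ :=
  ∫ y, σ y * (starRingEnd ℂ) (Φ (y - u)) *
    Complex.exp (-2 * (π : ℂ) * Complex.I * ∑ i, (ζ i : ℂ) * (y i : ℂ))

/-- The rotation `j(z₁, z₂) = (z₂, -z₁)` of phase space. -/
noncomputable def jmap {d : ℕ} (z : PhaseSpace d) : PhaseSpace d :=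
  WithLp.toLp 2 (Sum.elim (fun i => z (Sum.inr i)) (fun i => -(z (Sum.inl i))))

section WignerCovariance

variable {d : ℕ}

noncomputable def wignerPhase (w z : PhaseSpace d) : ℝ :=
  ∑ i, (freqPart w i + freqPart z i) / 2 * (_root_.posPart w i - _root_.posPart z i)

lemma wigner_tfShift_integrand_phase (w z p : PhaseSpace d) (t : ConfSpace d) :
    let a := _root_.posPart w - _root_.posPart z
    Complex.exp (2 * (π : ℂ) * Complex.I *
        ∑ i, (freqPart w i : ℂ) * ((_root_.posPart p + (2⁻¹ : ℝ) • (t + a)) i : ℂ)) *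
      (starRingEnd ℂ) (Complex.exp (2 * (π : ℂ) * Complex.I *
        ∑ i, (freqPart z i : ℂ) * ((_root_.posPart p - (2⁻¹ : ℝ) • (t + a)) i : ℂ))) *
      Complex.exp (-2 * (π : ℂ) * Complex.I * ∑ i, (freqPart p i : ℂ) * ((t + a) i : ℂ)) =
    Complex.exp (2 * (π : ℂ) * Complex.I *
        ((wignerPhase w z + ∑ j, jmap (w - z) j * p j : ℝ) : ℂ)) *
      Complex.exp (-2 * (π : ℂ) * Complex.I *
        ∑ i, (freqPart (p - (2⁻¹ : ℝ) • (w + z)) i : ℂ) * (t i : ℂ)) := by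
  intro a
  rw [← Complex.exp_conj, ← Complex.exp_add, ← Complex.exp_add, ← Complex.exp_add]
  congr 1
  simp only [map_mul, map_sum, Complex.conj_I, Complex.conj_ofReal, map_ofNat, wignerPhase,
    Fintype.sum_sum_type, jmap, Sum.elim_inl, Sum.elim_inr, PiLp.add_apply, PiLp.sub_apply,
    PiLp.smul_apply, smul_eq_mul, _root_.posPart, freqPart, a, PiLp.toLp_apply]
  push_cast
  simp only [Finset.mul_sum, ← Finset.sum_add_distrib]
  refine Finset.sum_congr rfl fun i _ => ?_
  ring

lemma wigner_tfShift_tfShift (f h : ConfSpace d → ℂ) (w z p : PhaseSpace d) :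
    wigner (tfShift w f) (tfShift z h) p =
      Complex.exp (2 * (π : ℂ) * Complex.I *
        ((wignerPhase w z + ∑ j, jmap (w - z) j * p j : ℝ) : ℂ)) *
      wigner f h (p - (2⁻¹ : ℝ) • (w + z)) := by
  set a : ConfSpace d := _root_.posPart w - _root_.posPart z
  set q : PhaseSpace d := p - (2⁻¹ : ℝ) • (w + z)
  rw [wigner, wigner, ← integral_add_right_eq_self _ a, ← integral_const_mul]
  refine integral_congr_ae (Filter.Eventually.of_forall fun t => ?_)
  have hplus : _root_.posPart p + (2⁻¹ : ℝ) • (t + a) - _root_.posPart w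
      = _root_.posPart q + (2⁻¹ : ℝ) • t := by
    ext i
    simp only [q, a, _root_.posPart, PiLp.add_apply, PiLp.sub_apply, PiLp.smul_apply,
      smul_eq_mul]
    ring
  have hminus : _root_.posPart p - (2⁻¹ : ℝ) • (t + a) - _root_.posPart z
      = _root_.posPart q - (2⁻¹ : ℝ) • t := by
    ext i
    simp only [q, a, _root_.posPart, PiLp.add_apply, PiLp.sub_apply, PiLp.smul_apply,
      smul_eq_mul]
    ring
  simp only [tfShift, hplus, hminus, map_mul]
  linear_combination (f (_root_.posPart q + (2⁻¹ : ℝ) • t) *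
    (starRingEnd ℂ) (h (_root_.posPart q - (2⁻¹ : ℝ) • t))) *
    wigner_tfShift_integrand_phase w z p t

end WignerCovariance

theorem weyl_kernel_eq_stft_of_symbol_general (d : ℕ) (g : SchwartzMap (ConfSpace d) ℂ)
    (σ : PhaseSpace d → ℂ) (w z : PhaseSpace d) :
    ‖∫ u, σ u * (starRingEnd ℂ) (wigner (tfShift w (⇑g)) (tfShift z (⇑g)) u)‖ =
      ‖stftPhase (wigner (⇑g) (⇑g)) σ ((2⁻¹ : ℝ) • (w + z)) (jmap (w - z))‖ := by
  set c : ℂ := Complex.exp (((-2 * π * wignerPhase w z : ℝ) : ℂ) * Complex.I)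
  have hintegrand : ∀ u : PhaseSpace d,
      σ u * (starRingEnd ℂ) (wigner (tfShift w g) (tfShift z g) u) =
        c * (σ u * (starRingEnd ℂ) (wigner g g (u - (2⁻¹ : ℝ) • (w + z))) *
          Complex.exp (-2 * (π : ℂ) * Complex.I * ∑ i, (jmap (w - z) i : ℂ) * (u i : ℂ))) := by
    intro u
    rw [wigner_tfShift_tfShift, map_mul, ← Complex.exp_conj]
    have hexponent : (starRingEnd ℂ) (2 * (π : ℂ) * Complex.I *
          ((wignerPhase w z + ∑ j, jmap (w - z) j * u j : ℝ) : ℂ)) =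
        ((-2 * π * wignerPhase w z : ℝ) : ℂ) * Complex.I +
          -2 * (π : ℂ) * Complex.I * ∑ i, (jmap (w - z) i : ℂ) * (u i : ℂ) := by
      simp only [map_mul, Complex.conj_I, Complex.conj_ofReal, map_ofNat]
      push_cast
      ring
    rw [hexponent, Complex.exp_add]
    ring
  simp only [hintegrand]
  rw [integral_const_mul, norm_mul, Complex.norm_exp_ofReal_mul_I, one_mul, stftPhase]

/-- The kernel of a Weyl operator with respect to time-frequency shifts equals a short-time
Fourier transform of its symbol:
`|⟨σ^w π(z)g, π(w)g⟩| = |V_{W(g,g)}σ((w+z)/2, j(w-z))|`. -/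
theorem weyl_kernel_eq_stft_of_symbol (d : ℕ) (g : SchwartzMap (ConfSpace d) ℂ)
    (σ : PhaseSpace d → ℂ) (hσmeas : Measurable σ) (Cb : ℝ) (hσbd : ∀ u, ‖σ u‖ ≤ Cb)
    (w z : PhaseSpace d) :
    ‖∫ u, σ u * (starRingEnd ℂ) (wigner (tfShift w (⇑g)) (tfShift z (⇑g)) u)‖ =
      ‖stftPhase (wigner (⇑g) (⇑g)) σ ((2⁻¹ : ℝ) • (w + z)) (jmap (w - z))‖ :=
  weyl_kernel_eq_stft_of_symbol_general d g σ w z
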